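/- The six Pauli operators on three qubits γ₁ = Z⊗X⊗I, γ₂ = Z⊗Y⊗I, γ₃ = I⊗Z⊗X, γ₄ = I⊗Z⊗Y, γ₅ = X⊗I⊗Z, γ₆ = Y⊗I⊗Z are Hermitian, square to the identity, and pairwise anticommute; the operator B = (−i)³ γ₁γ₂γ₃γ₄γ₅γ₆ equals Z⊗Z⊗Z; and the weight conditions hold: weight(B) = 3, weight(γ_p) ≥ 2, weight(B γ_p) ≥ 2, and weight(B γ_p γ_q) ≥ 2 for all 1 ≤ p < q ≤ 6. -/

import Mathlib

/-!
Up to a power of `i`, Pauli matrices multiply like their labels: `σ_a σ_b = i ^ k σ_{a * b}`,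
where `a * b` is the Klein four-group product of `{I, X, Y, Z}` and `k ∈ ZMod 4`. Tensor products
multiply sitewise, with the exponents adding up, so every product of the `γ_p` is `i ^ k` times
the Pauli matrix of an explicitly computable label. The claims then reduce to finitely many
identities between labels and exponents in `ZMod 4`, which are decided.
-/

open Matrix

/-- Labels for single-qubit Pauli matrices. -/
inductive P1 : Type
  | I : P1
  | X : P1
  | Y : P1
  | Z : P1
deriving DecidableEq

/-- The matrix entries of a single-qubit Pauli matrix, with the qubit basis indexed by
`Bool` (`false = |0⟩`, `true = |1⟩`). -/
def P1.entry : P1 → Bool → Bool → ℂ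
  | P1.I, a, b => if a = b then 1 else 0
  | P1.X, a, b => if a = b then 0 else 1
  | P1.Y, a, b => if a = b then 0 else if a then Complex.I else -Complex.I
  | P1.Z, a, b => if a = b then (if a then -1 else 1) else 0

/-- The multi-qubit Pauli matrix `⨂_{q ∈ Q} P_{f q}` on the qubits indexed by `Q`,
acting on `(ℂ²)^{⊗Q}` (whose standard basis is indexed by `Q → Bool`). -/
noncomputable def PauliMatrix {Q : Type*} [Fintype Q] (f : Q → P1) :
    Matrix (Q → Bool) (Q → Bool) ℂ :=
  Matrix.of fun a b => ∏ q, (f q).entry (a q) (b q)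

/-- The weight of a Pauli operator: the number of qubits on which it acts nontrivially. -/
noncomputable def pweight {Q : Type*} [Fintype Q] (f : Q → P1) : ℕ :=
  (Finset.univ.filter fun q => f q ≠ P1.I).card

/-- The Pauli labels of the six local Majorana modes on three qubits:
`γ₁ = Z⊗X⊗I`, `γ₂ = Z⊗Y⊗I`, `γ₃ = I⊗Z⊗X`, `γ₄ = I⊗Z⊗Y`, `γ₅ = X⊗I⊗Z`, `γ₆ = Y⊗I⊗Z`. -/
def lbl6 : Fin 6 → Fin 3 → P1 :=
  ![![P1.Z, P1.X, P1.I], ![P1.Z, P1.Y, P1.I], ![P1.I, P1.Z, P1.X],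
    ![P1.I, P1.Z, P1.Y], ![P1.X, P1.I, P1.Z], ![P1.Y, P1.I, P1.Z]]

/-- The six local Majorana modes `γ₁, …, γ₆` on three qubits. -/
noncomputable def gamma6 (p : Fin 6) : Matrix (Fin 3 → Bool) (Fin 3 → Bool) ℂ :=
  PauliMatrix (lbl6 p)

/-- The operator `B = (-i)³ γ₁ γ₂ γ₃ γ₄ γ₅ γ₆`. -/
noncomputable def Bgamma6 : Matrix (Fin 3 → Bool) (Fin 3 → Bool) ℂ :=
  ((-Complex.I) ^ 3) • ((List.ofFn gamma6).prod)

namespace P1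

instance : CommMagma P1 where
  mul
    | I, a => a
    | a, I => a
    | X, X => I
    | Y, Y => I
    | Z, Z => I
    | X, Y => Z
    | Y, X => Z
    | Y, Z => X
    | Z, Y => X
    | Z, X => Y
    | X, Z => Y
  mul_comm a b := by cases a <;> cases b <;> rfl

def phase : P1 → P1 → ZMod 4
  | X, Y => 1
  | Y, X => 3
  | Y, Z => 1
  | Z, Y => 3
  | Z, X => 1
  | X, Z => 3
  | _, _ => 0

lemma mul_self (a : P1) : a * a = I := by cases a <;> rfl

lemma phase_self (a : P1) : phase a a = 0 := by cases a <;> rfl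

end P1

noncomputable def iPow : AddChar (ZMod 4) ℂ := AddChar.zmodChar 4 Complex.I_pow_four

lemma AddChar.map_finset_sum {ι A M : Type*} [AddCommMonoid A] [CommMonoid M]
    (ψ : AddChar A M) (s : Finset ι) (f : ι → A) : ψ (∑ i ∈ s, f i) = ∏ i ∈ s, ψ (f i) := by
  classical
  induction s using Finset.induction_on with
  | empty => simp
  | insert i s hi ih => rw [Finset.sum_insert hi, Finset.prod_insert hi, ψ.map_add_eq_mul, ih]

lemma iPow_one : iPow 1 = Complex.I :=
  pow_one _

lemma iPow_two : iPow 2 = -1 :=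
  Complex.I_sq

lemma iPow_three : iPow 3 = -Complex.I := by
  change Complex.I ^ 3 = _
  rw [pow_succ, Complex.I_sq, neg_one_mul]

lemma iPow_ne_zero (n : ZMod 4) : iPow n ≠ 0 :=
  (iPow.val_isUnit n).ne_zero

lemma P1.sum_entry_mul_entry (a b : P1) (x y : Bool) :
    ∑ c : Bool, a.entry x c * b.entry c y = iPow (P1.phase a b) * (a * b).entry x y := by
  cases a <;> cases b <;> cases x <;> cases y <;>
    simp [P1.entry, P1.phase, iPow_one, iPow_three]

lemma P1.star_entry (a : P1) (x y : Bool) : star (a.entry x y) = a.entry y x := by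
  cases a <;> cases x <;> cases y <;> simp [P1.entry]

section PauliMatrix

variable {Q : Type*} [Fintype Q]

lemma conjTranspose_PauliMatrix (f : Q → P1) : (PauliMatrix f)ᴴ = PauliMatrix f := by
  ext x y
  simp only [conjTranspose_apply, PauliMatrix, of_apply, star_prod, P1.star_entry]

lemma PauliMatrix_I [DecidableEq Q] : PauliMatrix (fun _ : Q => P1.I) = 1 := by
  ext x y
  simp only [PauliMatrix, of_apply, P1.entry, Matrix.one_apply, Finset.prod_boole]
  simp [funext_iff]

lemma PauliMatrix_mul [DecidableEq Q] (f g : Q → P1) :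
    PauliMatrix f * PauliMatrix g = iPow (∑ q, P1.phase (f q) (g q)) • PauliMatrix (f * g) := by
  ext x y
  simp only [Matrix.mul_apply, PauliMatrix, of_apply, Matrix.smul_apply, smul_eq_mul,
    iPow.map_finset_sum, Pi.mul_apply, ← Finset.prod_mul_distrib, ← P1.sum_entry_mul_entry]
  rw [Finset.prod_univ_sum, Fintype.piFinset_univ]

lemma PauliMatrix_mul_self [DecidableEq Q] (f : Q → P1) : PauliMatrix f * PauliMatrix f = 1 := by
  rw [PauliMatrix_mul, show f * f = fun _ => P1.I from funext fun q => (f q).mul_self]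
  simp [P1.phase_self, PauliMatrix_I]

lemma PauliMatrix_mul_mul [DecidableEq Q] (f g h : Q → P1) :
    PauliMatrix f * PauliMatrix g * PauliMatrix h =
      iPow (∑ q, P1.phase (f q) (g q) + ∑ q, P1.phase ((f * g) q) (h q)) •
        PauliMatrix (f * g * h) := by
  rw [PauliMatrix_mul f, smul_mul, PauliMatrix_mul, smul_smul, iPow.map_add_eq_mul]

lemma PauliMatrix_anticomm [DecidableEq Q] (f g : Q → P1)
    (h : ∑ q, P1.phase (f q) (g q) = ∑ q, P1.phase (g q) (f q) + 2) :
    PauliMatrix f * PauliMatrix g + PauliMatrix g * PauliMatrix f = 0 := by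
  rw [PauliMatrix_mul, PauliMatrix_mul, mul_comm g f, h, iPow.map_add_eq_mul, iPow_two, ← add_smul]
  simp

def labelProd : List (Q → P1) → ZMod 4 × (Q → P1)
  | [] => (0, fun _ => P1.I)
  | f :: t => (∑ q, P1.phase (f q) ((labelProd t).2 q) + (labelProd t).1, f * (labelProd t).2)

lemma prod_map_PauliMatrix [DecidableEq Q] (L : List (Q → P1)) :
    (L.map PauliMatrix).prod = iPow (labelProd L).1 • PauliMatrix (labelProd L).2 := by
  induction L with
  | nil => simp [labelProd, PauliMatrix_I]
  | cons f t ih =>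
    rw [List.map_cons, List.prod_cons, ih, Matrix.mul_smul, PauliMatrix_mul, smul_smul,
      labelProd, iPow.map_add_eq_mul, mul_comm]

end PauliMatrix

lemma Bgamma6_eq : Bgamma6 = PauliMatrix (fun _ : Fin 3 => P1.Z) := by
  have hlabel : labelProd (List.ofFn lbl6) = (3, fun _ => P1.Z) := by decide
  have hgamma : List.ofFn gamma6 = (List.ofFn lbl6).map PauliMatrix := (List.map_ofFn ..).symm
  rw [Bgamma6, hgamma, prod_map_PauliMatrix, hlabel, iPow_three, smul_smul]
  norm_num [pow_succ]

theorem stmt18 :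
    -- the six modes are Hermitian,
    (∀ p : Fin 6, (gamma6 p)ᴴ = gamma6 p) ∧
    -- square to the identity,
    (∀ p : Fin 6, gamma6 p * gamma6 p = 1) ∧
    -- and pairwise anticommute;
    (∀ p q : Fin 6, p ≠ q → gamma6 p * gamma6 q + gamma6 q * gamma6 p = 0) ∧
    -- B = (-i)³ γ₁γ₂γ₃γ₄γ₅γ₆ equals Z⊗Z⊗Z;
    Bgamma6 = PauliMatrix (fun _ : Fin 3 => P1.Z) ∧
    -- weight(B) = 3;
    pweight (fun _ : Fin 3 => P1.Z) = 3 ∧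
    -- weight(γ_p) ≥ 2;
    (∀ p : Fin 6, 2 ≤ pweight (lbl6 p)) ∧
    -- weight(B γ_p) ≥ 2;
    (∀ p : Fin 6, ∃ (c : ℂ) (f : Fin 3 → P1), c ≠ 0 ∧
      Bgamma6 * gamma6 p = c • PauliMatrix f ∧ 2 ≤ pweight f) ∧
    -- weight(B γ_p γ_q) ≥ 2 for p < q
    (∀ p q : Fin 6, p < q → ∃ (c : ℂ) (f : Fin 3 → P1), c ≠ 0 ∧
      Bgamma6 * gamma6 p * gamma6 q = c • PauliMatrix f ∧ 2 ≤ pweight f) := by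
  refine ⟨fun p => conjTranspose_PauliMatrix _, fun p => PauliMatrix_mul_self _,
    fun p q hpq => PauliMatrix_anticomm _ _ (by revert p q; decide), Bgamma6_eq, by decide,
    by decide, fun p => ?_, fun p q hpq => ?_⟩
  · refine ⟨_, _, iPow_ne_zero _, by rw [Bgamma6_eq, gamma6, PauliMatrix_mul], ?_⟩
    revert p; decide
  · refine ⟨_, _, iPow_ne_zero _, by rw [Bgamma6_eq, gamma6, gamma6, PauliMatrix_mul_mul], ?_⟩
    revert p q; decide
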